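/- Let a, μ₀, u₀ ∈ ℝ, σ₀ > 0, σ_w > 0, and let α < β and γ < δ be real numbers. Set σ̃ = √(a²σ₀² + σ_w²), σ̄ = σ₀σ_w/σ̃ (so that 1/σ̄² = 1/σ₀² + a²/σ_w²), B = aσ₀/σ_w, Ā = (β − μ₀)/σ̄ and A̲ = (α − μ₀)/σ̄. Then (1/(2πσ₀σ_w)) ∫_γ^δ ∫_α^β s · exp(−(r−μ₀)²/(2σ₀²)) · exp(−(s − a r − u₀)²/(2σ_w²)) dr ds = (aμ₀ + u₀) · (1/(2πσ₀σ_w)) ∫_γ^δ ∫_α^β exp(−(r−μ₀)²/(2σ₀²)) · exp(−(s − a r − u₀)²/(2σ_w²)) dr ds + σ̃ · ∫_{(γ − aμ₀ − u₀)/σ̃}^{(δ − aμ₀ − u₀)/σ̃} s̃ · φ(s̃) · (Φ(Ā − B s̃) − Φ(A̲ − B s̃)) ds̃. -/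

import Mathlib

/-!
Completing the square in `r` factors the joint density at `s = a μ₀ + u₀ + σ̃ t` as
`φ(t) · φ((r - μ₀) / σ̄ - B t) / (σ̃ σ̄)`, so the inner integral over `(α, β)` is
`φ(t) (Φ(Ā - B t) - Φ(A̲ - B t)) / σ̃`. In the outer integral one writes
`s = (a μ₀ + u₀) + (s - a μ₀ - u₀)`: the first summand gives the zeroth moment and the
substitution `t = (s - a μ₀ - u₀) / σ̃` turns the second into the one-dimensional integral.
-/

/-- The standard normal density. -/
noncomputable def stdGaussPDF (x : ℝ) : ℝ :=
  Real.exp (-x ^ 2 / 2) / Real.sqrt (2 * Real.pi)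

/-- The standard normal cumulative distribution function. -/
noncomputable def stdGaussCDF (x : ℝ) : ℝ :=
  ∫ t in Set.Iic x, stdGaussPDF t

open Real MeasureTheory

@[fun_prop]
lemma continuous_stdGaussPDF : Continuous stdGaussPDF := by
  unfold stdGaussPDF; fun_prop

lemma integrable_stdGaussPDF : Integrable stdGaussPDF := by
  have h : stdGaussPDF = fun x => exp (-(1 / 2) * x ^ 2) / √(2 * π) := by
    funext x; unfold stdGaussPDF; ring_nf
  rw [h]
  exact (integrable_exp_neg_mul_sq (by norm_num)).div_const _

lemma stdGaussCDF_sub_stdGaussCDF (x y : ℝ) :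
    stdGaussCDF x - stdGaussCDF y = ∫ u in y..x, stdGaussPDF u :=
  intervalIntegral.integral_Iic_sub_Iic integrable_stdGaussPDF.integrableOn
    integrable_stdGaussPDF.integrableOn

@[fun_prop]
lemma continuous_stdGaussCDF : Continuous stdGaussCDF := by
  have h : stdGaussCDF = fun x => stdGaussCDF 0 + ∫ u in (0 : ℝ)..x, stdGaussPDF u := by
    funext x; rw [← stdGaussCDF_sub_stdGaussCDF]; ring
  rw [h]
  exact continuous_const.add <| intervalIntegral.continuous_primitive
    (fun _ _ => integrable_stdGaussPDF.intervalIntegrable) 0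

lemma integral_stdGaussPDF_div_sub {σ : ℝ} (hσ : σ ≠ 0) (μ c α β : ℝ) :
    ∫ r in α..β, stdGaussPDF ((r - μ) / σ - c)
      = σ * (stdGaussCDF ((β - μ) / σ - c) - stdGaussCDF ((α - μ) / σ - c)) := by
  rw [stdGaussCDF_sub_stdGaussCDF,
    intervalIntegral.integral_comp_sub_right (fun r => stdGaussPDF (r / σ - c)),
    intervalIntegral.integral_comp_div_sub _ hσ, smul_eq_mul]

lemma integral_mul_div_comp_sub_div (g : ℝ → ℝ) (hg : Continuous g) {σ : ℝ} (hσ : σ ≠ 0)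
    (m γ δ : ℝ) :
    ∫ s in γ..δ, s * (1 / σ * g ((s - m) / σ))
      = m * (∫ s in γ..δ, 1 / σ * g ((s - m) / σ))
        + σ * ∫ t in (γ - m) / σ..(δ - m) / σ, t * g t := by
  have hcont : Continuous fun s => 1 / σ * g ((s - m) / σ) := by fun_prop
  have hcentered : ∫ s in γ..δ, (s - m) * (1 / σ * g ((s - m) / σ))
      = σ * ∫ t in (γ - m) / σ..(δ - m) / σ, t * g t := by
    have h : (fun s => (s - m) * (1 / σ * g ((s - m) / σ)))
        = fun s => (fun t => t * g t) ((s - m) / σ) := by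
      funext s; field_simp
    rw [h, intervalIntegral.integral_comp_sub_right (fun s => (fun t => t * g t) (s / σ)),
      intervalIntegral.integral_comp_div (fun t => t * g t) hσ, smul_eq_mul]
  rw [← hcentered, ← intervalIntegral.integral_const_mul, ← intervalIntegral.integral_add]
  · congr 1; funext s; ring
  · exact (continuous_const.mul hcont).intervalIntegrable _ _
  · exact ((continuous_id.sub continuous_const).mul hcont).intervalIntegrable _ _

section LinearGaussian

variable {a σ₀ σw σt : ℝ}

lemma ne_zero_of_sq_eq_sq_add_sq (hσw : σw ≠ 0)
    (hσt_sq : σt ^ 2 = a ^ 2 * σ₀ ^ 2 + σw ^ 2) : σt ≠ 0 := by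
  rintro rfl
  have : 0 < σw ^ 2 := by positivity
  nlinarith [sq_nonneg (a * σ₀)]

lemma sq_div_add_sq_div_eq_sq_add_sq (hσ₀ : σ₀ ≠ 0) (hσw : σw ≠ 0)
    (hσt_sq : σt ^ 2 = a ^ 2 * σ₀ ^ 2 + σw ^ 2) (t x : ℝ) :
    x ^ 2 / σ₀ ^ 2 + (σt * t - a * x) ^ 2 / σw ^ 2
      = t ^ 2 + (x / (σ₀ * σw / σt) - a * σ₀ / σw * t) ^ 2 := by
  field_simp
  linear_combination (σ₀ ^ 2 * t ^ 2 - x ^ 2) * hσt_sq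

/-- The joint density of `(x₀ - μ₀, x₁)` at `x₁ = a μ₀ + u₀ + σt t` is the density of the
standardised `x₁` times the conditional density of `x₀` given `x₁`, a Gaussian of standard
deviation `σ₀ σw / σt`. -/
lemma exp_mul_exp_eq_stdGaussPDF_mul (hσ₀ : σ₀ ≠ 0) (hσw : σw ≠ 0)
    (hσt_sq : σt ^ 2 = a ^ 2 * σ₀ ^ 2 + σw ^ 2) (t x : ℝ) :
    1 / (2 * π * σ₀ * σw) *
        (exp (-x ^ 2 / (2 * σ₀ ^ 2)) * exp (-(σt * t - a * x) ^ 2 / (2 * σw ^ 2)))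
      = 1 / σt * (stdGaussPDF t *
          (1 / (σ₀ * σw / σt) * stdGaussPDF (x / (σ₀ * σw / σt) - a * σ₀ / σw * t))) := by
  have hσt := ne_zero_of_sq_eq_sq_add_sq hσw hσt_sq
  have hexp : -x ^ 2 / (2 * σ₀ ^ 2) + -(σt * t - a * x) ^ 2 / (2 * σw ^ 2)
      = -t ^ 2 / 2 + -(x / (σ₀ * σw / σt) - a * σ₀ / σw * t) ^ 2 / 2 := by
    linear_combination (-1 / 2) * sq_div_add_sq_div_eq_sq_add_sq hσ₀ hσw hσt_sq t x
  have hsqrt : √(2 * π) ^ 2 = 2 * π := sq_sqrt (by positivity)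
  unfold stdGaussPDF
  rw [← exp_add, hexp, exp_add]
  field_simp
  rw [hsqrt]

lemma integral_exp_mul_exp_eq_stdGaussPDF_mul (hσ₀ : σ₀ ≠ 0) (hσw : σw ≠ 0)
    (hσt_sq : σt ^ 2 = a ^ 2 * σ₀ ^ 2 + σw ^ 2) (μ₀ u₀ α β s : ℝ) :
    1 / (2 * π * σ₀ * σw) * ∫ r in α..β,
        exp (-(r - μ₀) ^ 2 / (2 * σ₀ ^ 2)) * exp (-(s - a * r - u₀) ^ 2 / (2 * σw ^ 2))
      = 1 / σt * (stdGaussPDF ((s - (a * μ₀ + u₀)) / σt) *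
          (stdGaussCDF ((β - μ₀) / (σ₀ * σw / σt)
                - a * σ₀ / σw * ((s - (a * μ₀ + u₀)) / σt))
            - stdGaussCDF ((α - μ₀) / (σ₀ * σw / σt)
                - a * σ₀ / σw * ((s - (a * μ₀ + u₀)) / σt)))) := by
  have hσt := ne_zero_of_sq_eq_sq_add_sq hσw hσt_sq
  set t := (s - (a * μ₀ + u₀)) / σt
  have hs : ∀ r, s - a * r - u₀ = σt * t - a * (r - μ₀) := fun r => by
    simp only [t]; field_simp; ring
  simp_rw [← intervalIntegral.integral_const_mul, hs,
    exp_mul_exp_eq_stdGaussPDF_mul hσ₀ hσw hσt_sq, intervalIntegral.integral_const_mul,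
    integral_stdGaussPDF_div_sub (by positivity : σ₀ * σw / σt ≠ 0)]
  field_simp

end LinearGaussian

theorem stmt11_general (a μ₀ u₀ σ₀ σw : ℝ) (hσ₀ : 0 < σ₀) (hσw : 0 < σw)
    (α β γ δ : ℝ) :
    1 / (2 * Real.pi * σ₀ * σw) *
        ∫ s in γ..δ, ∫ r in α..β,
          s * Real.exp (-(r - μ₀) ^ 2 / (2 * σ₀ ^ 2)) *
            Real.exp (-(s - a * r - u₀) ^ 2 / (2 * σw ^ 2))
      = (a * μ₀ + u₀) * (1 / (2 * Real.pi * σ₀ * σw) *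
            ∫ s in γ..δ, ∫ r in α..β,
              Real.exp (-(r - μ₀) ^ 2 / (2 * σ₀ ^ 2)) *
                Real.exp (-(s - a * r - u₀) ^ 2 / (2 * σw ^ 2)))
        + Real.sqrt (a ^ 2 * σ₀ ^ 2 + σw ^ 2) *
            ∫ t in ((γ - a * μ₀ - u₀) / Real.sqrt (a ^ 2 * σ₀ ^ 2 + σw ^ 2))..(
                (δ - a * μ₀ - u₀) / Real.sqrt (a ^ 2 * σ₀ ^ 2 + σw ^ 2)),
              t * stdGaussPDF t *
                (stdGaussCDF ((β - μ₀) / (σ₀ * σw / Real.sqrt (a ^ 2 * σ₀ ^ 2 + σw ^ 2))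
                    - a * σ₀ / σw * t)
                 - stdGaussCDF ((α - μ₀) / (σ₀ * σw / Real.sqrt (a ^ 2 * σ₀ ^ 2 + σw ^ 2))
                    - a * σ₀ / σw * t)) := by
  set σt := √(a ^ 2 * σ₀ ^ 2 + σw ^ 2)
  set m := a * μ₀ + u₀
  have hσt_sq : σt ^ 2 = a ^ 2 * σ₀ ^ 2 + σw ^ 2 := sq_sqrt (by positivity)
  set g : ℝ → ℝ := fun t => stdGaussPDF t *
    (stdGaussCDF ((β - μ₀) / (σ₀ * σw / σt) - a * σ₀ / σw * t)
      - stdGaussCDF ((α - μ₀) / (σ₀ * σw / σt) - a * σ₀ / σw * t))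
  have hinner : ∀ s, 1 / (2 * π * σ₀ * σw) * ∫ r in α..β,
      exp (-(r - μ₀) ^ 2 / (2 * σ₀ ^ 2)) * exp (-(s - a * r - u₀) ^ 2 / (2 * σw ^ 2))
        = 1 / σt * g ((s - m) / σt) :=
    integral_exp_mul_exp_eq_stdGaussPDF_mul hσ₀.ne' hσw.ne' hσt_sq μ₀ u₀ α β
  have hmoment : ∀ s, 1 / (2 * π * σ₀ * σw) * ∫ r in α..β,
      s * exp (-(r - μ₀) ^ 2 / (2 * σ₀ ^ 2)) * exp (-(s - a * r - u₀) ^ 2 / (2 * σw ^ 2))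
        = s * (1 / σt * g ((s - m) / σt)) := fun s => by
    rw [← hinner s]
    simp_rw [mul_assoc s, intervalIntegral.integral_const_mul]
    ring
  rw [← intervalIntegral.integral_const_mul, intervalIntegral.integral_congr fun s _ => hmoment s,
    ← intervalIntegral.integral_const_mul, intervalIntegral.integral_congr fun s _ => hinner s,
    sub_sub γ, sub_sub δ]
  simp_rw [mul_assoc _ (stdGaussPDF _)]
  exact integral_mul_div_comp_sub_div g (by fun_prop)
    (ne_zero_of_sq_eq_sq_add_sq hσw.ne' hσt_sq) m γ δ

/-- Reduction of the unnormalized truncated first moment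
`E[x₁ · 1{x₀ ∈ (α,β), x₁ ∈ (γ,δ)}]` for the linear Gaussian system
`x₁ = a x₀ + u₀ + w₀`, `x₀ ∼ N(μ₀, σ₀²)`, `w₀ ∼ N(0, σ_w²)`, to a
one-dimensional Gaussian-type integral. -/
theorem stmt11 (a μ₀ u₀ σ₀ σw : ℝ) (hσ₀ : 0 < σ₀) (hσw : 0 < σw)
    (α β γ δ : ℝ) (hαβ : α < β) (hγδ : γ < δ) :
    1 / (2 * Real.pi * σ₀ * σw) *
        ∫ s in γ..δ, ∫ r in α..β,
          s * Real.exp (-(r - μ₀) ^ 2 / (2 * σ₀ ^ 2)) *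
            Real.exp (-(s - a * r - u₀) ^ 2 / (2 * σw ^ 2))
      = (a * μ₀ + u₀) * (1 / (2 * Real.pi * σ₀ * σw) *
            ∫ s in γ..δ, ∫ r in α..β,
              Real.exp (-(r - μ₀) ^ 2 / (2 * σ₀ ^ 2)) *
                Real.exp (-(s - a * r - u₀) ^ 2 / (2 * σw ^ 2)))
        + Real.sqrt (a ^ 2 * σ₀ ^ 2 + σw ^ 2) *
            ∫ t in ((γ - a * μ₀ - u₀) / Real.sqrt (a ^ 2 * σ₀ ^ 2 + σw ^ 2))..(
                (δ - a * μ₀ - u₀) / Real.sqrt (a ^ 2 * σ₀ ^ 2 + σw ^ 2)),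
              t * stdGaussPDF t *
                (stdGaussCDF ((β - μ₀) / (σ₀ * σw / Real.sqrt (a ^ 2 * σ₀ ^ 2 + σw ^ 2))
                    - a * σ₀ / σw * t)
                 - stdGaussCDF ((α - μ₀) / (σ₀ * σw / Real.sqrt (a ^ 2 * σ₀ ^ 2 + σw ^ 2))
                    - a * σ₀ / σw * t)) :=
  stmt11_general a μ₀ u₀ σ₀ σw hσ₀ hσw α β γ δ
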